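/- Let A be a two-sided skew brace of nilpotent type, i.e. whose additive group (A,+) is nilpotent. Then the following are equivalent: (1) A is left nilpotent; (2) A is right nilpotent; (3) A is strongly nilpotent. -/

import Mathlib

/-- A skew (left) brace: a type with two group structures `(A,+)` and `(A,∘)`
(the latter written multiplicatively) sharing the same identity, satisfying the
left skew brace law `a ∘ (b + c) = a ∘ b − a + a ∘ c`. -/
class SkewBrace (A : Type*) extends AddGroup A, Group A where
  mul_add_eq : ∀ a b c : A, a * (b + c) = a * b - a + a * c

namespace SkewBrace

variable {A : Type*}

/-- A skew brace is two-sided if `(a + b) ∘ c = a ∘ c − c + b ∘ c`. -/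
def IsTwoSided (A : Type*) [SkewBrace A] : Prop :=
  ∀ a b c : A, (a + b) * c = a * c - c + b * c

/-- `a * b = −a + a∘b − b`. -/
def bstar [SkewBrace A] (a b : A) : A := -a + a * b - b

/-- the star operation of the opposite skew brace: `a *ₒₚ b = −b + a∘b − a`. -/
def bstarOp [SkewBrace A] (a b : A) : A := -b + a * b - a

/-- `X * Y`: the additive subgroup generated by all `x * y`, `x ∈ X`, `y ∈ Y`. -/
def starSet [SkewBrace A] (X Y : Set A) : AddSubgroup A :=
  AddSubgroup.closure {z | ∃ x ∈ X, ∃ y ∈ Y, z = bstar x y}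

/-- `A² = A * A`. -/
def sq (A : Type*) [SkewBrace A] : AddSubgroup A := starSet Set.univ Set.univ

/-- `A²ₒₚ`, the additive subgroup generated by all `a *ₒₚ b`. -/
def sqOp (A : Type*) [SkewBrace A] : AddSubgroup A :=
  AddSubgroup.closure {z | ∃ a b : A, z = bstarOp a b}

/-- A skew brace is weakly trivial if `A² ∩ A²ₒₚ = {0}`. -/
def IsWeaklyTrivial (A : Type*) [SkewBrace A] : Prop := sq A ⊓ sqOp A = ⊥

/-- An ideal of a skew brace: an additive subgroup, normal in `(A,+)` and in
`(A,∘)`, and invariant under all `λ_a : b ↦ −a + a∘b`. -/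
structure IsIdeal [SkewBrace A] (I : AddSubgroup A) : Prop where
  add_conj : ∀ a : A, ∀ x ∈ I, a + x - a ∈ I
  mul_conj : ∀ a : A, ∀ x ∈ I, a * x * a⁻¹ ∈ I
  lambda_mem : ∀ a : A, ∀ x ∈ I, -a + a * x ∈ I

/-- The left series `A¹ = A`, `Aⁿ⁺¹ = A * Aⁿ`; `leftSeries A n` is `Aⁿ⁺¹`. -/
def leftSeries (A : Type*) [SkewBrace A] : ℕ → AddSubgroup A
  | 0 => ⊤
  | n + 1 => starSet Set.univ (leftSeries A n : Set A)

/-- The right series `A⁽¹⁾ = A`, `A⁽ⁿ⁺¹⁾ = A⁽ⁿ⁾ * A`; `rightSeries A n` is `A⁽ⁿ⁺¹⁾`. -/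
def rightSeries (A : Type*) [SkewBrace A] : ℕ → AddSubgroup A
  | 0 => ⊤
  | n + 1 => starSet (rightSeries A n : Set A) Set.univ

/-- A skew brace is left nilpotent if its left series reaches `{0}`. -/
def IsLeftNilpotent (A : Type*) [SkewBrace A] : Prop := ∃ n, leftSeries A n = ⊥

/-- A skew brace is right nilpotent if its right series reaches `{0}`. -/
def IsRightNilpotent (A : Type*) [SkewBrace A] : Prop := ∃ n, rightSeries A n = ⊥

/-- The series `A⁽¹⁾ = A`, `A^[n+1]` generated by the union of `A^[i] * A^[n+1-i]`;
`strongSeries A n` is `A^[n+1]`. -/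
def strongSeries (A : Type*) [SkewBrace A] : ℕ → AddSubgroup A
  | 0 => ⊤
  | n + 1 => ⨆ i : Fin (n + 1),
      starSet (strongSeries A i.val : Set A) (strongSeries A (n - i.val) : Set A)
  decreasing_by
  · exact i.isLt
  · have := i.isLt; omega

/-- A skew brace is strongly nilpotent if the series `A^[n]` reaches `{0}`. -/
def IsStronglyNilpotent (A : Type*) [SkewBrace A] : Prop := ∃ n, strongSeries A n = ⊥

/-- The derived series of a skew brace: `A₁ = A`, `Aₙ₊₁ = Aₙ * Aₙ`;
`derivedSeriesBrace A n` is `Aₙ₊₁`. -/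
def derivedSeriesBrace (A : Type*) [SkewBrace A] : ℕ → AddSubgroup A
  | 0 => ⊤
  | n + 1 => starSet (derivedSeriesBrace A n : Set A) (derivedSeriesBrace A n : Set A)

/-- A skew brace is soluble if its derived series reaches `{0}`. -/
def IsSolubleBrace (A : Type*) [SkewBrace A] : Prop := ∃ n, derivedSeriesBrace A n = ⊥

end SkewBrace

namespace SkewBrace

variable {A : Type*} [SkewBrace A]

lemma one_eq_zero : (1 : A) = 0 := by
  have h := SkewBrace.mul_add_eq (1:A) 0 0
  simp at h
  have h0 : (0:A) = -1 := by simpa using h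
  calc (1:A) = -(-1) := by rw [neg_neg]
  _ = -0 := by rw [← h0]
  _ = 0 := neg_zero

lemma mul_zero' (x : A) : x * (0:A) = x := by rw [← one_eq_zero, mul_one]
lemma zero_mul' (x : A) : (0:A) * x = x := by rw [← one_eq_zero, one_mul]

lemma mul_neg' (x y : A) : x * (-y) = x + -(x * y) + x := by
  have h := SkewBrace.mul_add_eq x y (-y)
  rw [add_neg_cancel, mul_zero'] at h
  have h2 := congrArg (fun z => -(x*y - x) + z) h
  simp only [neg_add_cancel_left] at h2
  rw [← h2]
  simp [sub_eq_add_neg, neg_add_rev, neg_neg, add_assoc]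

lemma neg_mul' (h2s : IsTwoSided A) (x y : A) : (-x) * y = y + -(x * y) + y := by
  have h := h2s x (-x) y
  rw [add_neg_cancel, zero_mul'] at h
  have h2 := congrArg (fun z => -(x*y - y) + z) h
  simp only [neg_add_cancel_left] at h2
  rw [← h2]
  simp [sub_eq_add_neg, neg_add_rev, neg_neg, add_assoc]

lemma bstar_zero_left (b : A) : bstar 0 b = 0 := by simp [bstar, zero_mul']
lemma bstar_zero_right (a : A) : bstar a 0 = 0 := by simp [bstar, mul_zero']

lemma circ_decomp (x y : A) : x * y = x + bstar x y + y := by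
  simp [bstar, sub_eq_add_neg, add_assoc]

/-- I1 -/
lemma bstar_add_right (x y z : A) :
    bstar x (y + z) = bstar x y + y + bstar x z - y := by
  simp only [bstar, SkewBrace.mul_add_eq, sub_eq_add_neg, neg_add_rev, add_assoc,
    neg_add_cancel_left, add_neg_cancel_left, add_neg_cancel, neg_add_cancel, add_zero, zero_add]

/-- I2 -/
lemma bstar_add_left (h2s : IsTwoSided A) (x z y : A) :
    bstar (x + z) y = -z + bstar x y + z + bstar z y := by
  have hts : ∀ a b c : A, (a + b) * c = a * c - c + b * c := h2s
  simp only [bstar, hts, sub_eq_add_neg, neg_add_rev, add_assoc,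
    neg_add_cancel_left, add_neg_cancel_left, add_neg_cancel, neg_add_cancel, add_zero, zero_add]

lemma bstar_neg_right (x y : A) : bstar x (-y) = -y + -(bstar x y) + y := by
  simp only [bstar, mul_neg', sub_eq_add_neg, neg_add_rev, neg_neg, add_assoc,
    neg_add_cancel_left, add_neg_cancel_left, add_neg_cancel, neg_add_cancel, add_zero, zero_add]

lemma bstar_neg_left (h2s : IsTwoSided A) (x y : A) :
    bstar (-x) y = x + -(bstar x y) + -x := by
  simp only [bstar, neg_mul' h2s, sub_eq_add_neg, neg_add_rev, neg_neg, add_assoc,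
    neg_add_cancel_left, add_neg_cancel_left, add_neg_cancel, neg_add_cancel, add_zero, zero_add]

/-- I3 -/
lemma bstar_mul_left (x y z : A) :
    bstar (x * y) z = bstar x (bstar y z) + bstar y z + bstar x z := by
  simp only [bstar, SkewBrace.mul_add_eq, mul_neg', mul_assoc, sub_eq_add_neg,
    neg_add_rev, neg_neg, add_assoc, neg_add_cancel_left, add_neg_cancel_left,
    add_neg_cancel, neg_add_cancel, add_zero, zero_add]

/-- Eq★ -/
lemma bstar_bstar (h2s : IsTwoSided A) (x y z : A) :
    bstar (bstar x y) z =
      -(bstar x y) + (-(bstar x z) + (bstar x y + (y + (bstar x (bstar y z) +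
        (bstar y z + (bstar x z + (-(bstar y z) + -y))))))) := by
  have hts : ∀ a b c : A, (a + b) * c = a * c - c + b * c := h2s
  simp only [bstar, hts, SkewBrace.mul_add_eq, mul_neg', neg_mul' h2s, mul_assoc,
    sub_eq_add_neg, neg_add_rev, neg_neg, add_assoc, neg_add_cancel_left,
    add_neg_cancel_left, add_neg_cancel, neg_add_cancel, add_zero, zero_add]


/-- λ_a as additive automorphism -/
def lamE (a : A) : A ≃+ A where
  toFun b := -a + a * b
  invFun b := a⁻¹ * (a + b)
  left_inv b := by
    show a⁻¹ * (a + (-a + a * b)) = b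
    rw [add_neg_cancel_left, ← mul_assoc, inv_mul_cancel, one_mul]
  right_inv b := by
    show -a + a * (a⁻¹ * (a + b)) = b
    rw [← mul_assoc, mul_inv_cancel, one_mul, neg_add_cancel_left]
  map_add' b c := by
    show -a + a * (b + c) = (-a + a * b) + (-a + a * c)
    rw [SkewBrace.mul_add_eq]
    simp [sub_eq_add_neg, add_assoc]

/-- ρ_a as additive automorphism (two-sided case) -/
def rhoE (h2s : IsTwoSided A) (a : A) : A ≃+ A where
  toFun x := x * a - a
  invFun x := (x + a) * a⁻¹
  left_inv x := by
    show (x * a - a + a) * a⁻¹ = x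
    rw [sub_add_cancel, mul_assoc, mul_inv_cancel, mul_one]
  right_inv x := by
    show (x + a) * a⁻¹ * a - a = x
    rw [mul_assoc, inv_mul_cancel, mul_one, add_sub_cancel_right]
  map_add' x y := by
    show (x + y) * a - a = (x * a - a) + (y * a - a)
    rw [h2s x y a]
    simp [sub_eq_add_neg, add_assoc]

lemma bstar_eq_lam (a b : A) : bstar a b = lamE a b - b := rfl

lemma bstar_eq_rho (h2s : IsTwoSided A) (a b : A) : bstar a b = -a + rhoE h2s b a := by
  simp [bstar, rhoE, sub_eq_add_neg, add_assoc]

/-- our additive lower central series -/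
def gammaA (A : Type*) [SkewBrace A] : ℕ → AddSubgroup A
  | 0 => ⊤
  | s + 1 => AddSubgroup.closure {z | ∃ u ∈ gammaA A s, ∃ a : A, z = u + a - u - a}

lemma gammaA_succ_le (s : ℕ) : gammaA A (s+1) ≤ gammaA A s := by
  induction s with
  | zero => exact le_top
  | succ s ih =>
    rw [show gammaA A (s+2) = AddSubgroup.closure
      {z | ∃ u ∈ gammaA A (s+1), ∃ a : A, z = u + a - u - a} from rfl]
    rw [AddSubgroup.closure_le]
    rintro z ⟨u, hu, a, rfl⟩
    exact AddSubgroup.subset_closure ⟨u, ih hu, a, rfl⟩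

lemma comm_mem_gammaA {s : ℕ} {u : A} (hu : u ∈ gammaA A s) (a : A) :
    u + a - u - a ∈ gammaA A (s+1) :=
  AddSubgroup.subset_closure ⟨u, hu, a, rfl⟩

/-- invariance of gammaA under additive equivalences -/
lemma gammaA_equiv_mem (e : A ≃+ A) : ∀ s, ∀ u ∈ gammaA A s, e u ∈ gammaA A s := by
  intro s
  induction s with
  | zero => intro u _; exact AddSubgroup.mem_top _
  | succ s ih =>
    intro u hu
    induction hu using AddSubgroup.closure_induction with
    | mem z hz =>
      obtain ⟨v, hv, a, rfl⟩ := hz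
      have : e (v + a - v - a) = e v + e a - e v - e a := by
        simp [map_sub, map_add]
      rw [this]
      exact AddSubgroup.subset_closure ⟨e v, ih v hv, e a, rfl⟩
    | zero => simpa using (gammaA A (s+1)).zero_mem
    | add x y _ _ hx hy => rw [map_add]; exact (gammaA A (s+1)).add_mem hx hy
    | neg x _ hx => rw [map_neg]; exact (gammaA A (s+1)).neg_mem hx

lemma bstar_mem_gammaA_right {s : ℕ} (a : A) {u : A} (hu : u ∈ gammaA A s) :
    bstar a u ∈ gammaA A s := by
  rw [bstar_eq_lam, sub_eq_add_neg]
  exact (gammaA A s).add_mem (gammaA_equiv_mem (lamE a) s u hu) ((gammaA A s).neg_mem hu)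

lemma bstar_mem_gammaA_left (h2s : IsTwoSided A) {s : ℕ} {u : A} (hu : u ∈ gammaA A s) (a : A) :
    bstar u a ∈ gammaA A s := by
  rw [bstar_eq_rho h2s]
  exact (gammaA A s).add_mem ((gammaA A s).neg_mem hu) (gammaA_equiv_mem (rhoE h2s a) s u hu)

/-- gammaA maps into the multiplicative lower central series -/
lemma gammaA_le_lcs : ∀ s, ∀ x ∈ gammaA A s,
    Multiplicative.ofAdd x ∈ (⊤ : Subgroup (Multiplicative A)).lowerCentralSeries s := by
  intro s
  induction s with
  | zero => intro x _; exact Subgroup.mem_top _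
  | succ s ih =>
    intro x hx
    induction hx using AddSubgroup.closure_induction with
    | mem z hz =>
      obtain ⟨u, hu, a, rfl⟩ := hz
      rw [Subgroup.lowerCentralSeries_succ]
      apply Subgroup.subset_closure
      refine ⟨Multiplicative.ofAdd u, ih u hu, Multiplicative.ofAdd a, Subgroup.mem_top _, ?_⟩
      show u + a + -u + -a = u + a - u - a
      rw [sub_eq_add_neg, sub_eq_add_neg]
    | zero => exact Subgroup.one_mem _
    | add x y _ _ hx hy => exact Subgroup.mul_mem _ hx hy
    | neg x _ hx => exact Subgroup.inv_mem _ hx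

lemma gammaA_eq_bot_of_nilpotent (hnil : Group.IsNilpotent (Multiplicative A)) :
    ∃ c, gammaA A c = ⊥ := by
  obtain ⟨c, hc⟩ := nilpotent_iff_lowerCentralSeries.mp hnil
  refine ⟨c, ?_⟩
  rw [eq_bot_iff]
  intro x hx
  have := gammaA_le_lcs c x hx
  rw [hc, Subgroup.mem_bot] at this
  have : x = 0 := this
  simpa [this] using (⊥ : AddSubgroup A).zero_mem -- fix

-- basic starSet lemmas
lemma bstar_mem_starSet {X Y : Set A} {x y : A} (hx : x ∈ X) (hy : y ∈ Y) :
    bstar x y ∈ starSet X Y :=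
  AddSubgroup.subset_closure ⟨x, hx, y, hy, rfl⟩

lemma starSet_le {X Y : Set A} {K : AddSubgroup A}
    (h : ∀ x ∈ X, ∀ y ∈ Y, bstar x y ∈ K) : starSet X Y ≤ K := by
  rw [starSet, AddSubgroup.closure_le]
  rintro z ⟨x, hx, y, hy, rfl⟩
  exact h x hx y hy

lemma starSet_mono {X X' Y Y' : Set A} (hX : X ⊆ X') (hY : Y ⊆ Y') :
    starSet X Y ≤ starSet X' Y' :=
  starSet_le fun x hx y hy => bstar_mem_starSet (hX hx) (hY hy)

lemma strongSeries_zero : strongSeries A 0 = ⊤ := by rw [strongSeries]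

lemma strongSeries_succ (n : ℕ) : strongSeries A (n + 1) = ⨆ i : Fin (n + 1),
    starSet (strongSeries A i.val : Set A) (strongSeries A (n - i.val) : Set A) := by
  rw [strongSeries]

lemma starSet_le_strongSeries {p q : ℕ} (i : Fin (p + 1)) (h : q = p - i.val) :
    starSet (strongSeries A i.val : Set A) (strongSeries A q : Set A)
      ≤ strongSeries A (p + 1) := by
  rw [strongSeries_succ, h]
  exact le_iSup (fun j : Fin (p+1) => starSet (strongSeries A j.val : Set A)
    (strongSeries A (p - j.val) : Set A)) i

lemma strongSeries_succ_le (n : ℕ) : strongSeries A (n + 1) ≤ strongSeries A n := by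
  induction n using Nat.strong_induction_on with
  | _ n ih =>
    match n with
    | 0 => rw [strongSeries_zero]; exact le_top
    | n + 1 =>
      rw [strongSeries_succ (n+1)]
      apply iSup_le
      intro i
      rcases Nat.lt_or_ge i.val (n + 1) with hlt | hge
      · have h1 : n + 1 - i.val = (n - i.val) + 1 := by omega
        have h2 : strongSeries A (n + 1 - i.val) ≤ strongSeries A (n - i.val) := by
          rw [h1]; exact ih (n - i.val) (by omega)
        calc starSet (strongSeries A i.val : Set A) (strongSeries A (n+1-i.val) : Set A)
            ≤ starSet (strongSeries A i.val : Set A) (strongSeries A (n-i.val) : Set A) :=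
              starSet_mono subset_rfl h2
          _ ≤ strongSeries A (n + 1) := starSet_le_strongSeries ⟨i.val, hlt⟩ rfl
      · have hi : i.val = n + 1 := by omega
        have h0 : n + 1 - i.val = 0 := by omega
        have h2 : strongSeries A i.val ≤ strongSeries A n := by
          rw [hi]; exact ih n (by omega)
        calc starSet (strongSeries A i.val : Set A) (strongSeries A (n+1-i.val) : Set A)
            ≤ starSet (strongSeries A n : Set A) (strongSeries A 0 : Set A) := by
              rw [h0]; exact starSet_mono h2 subset_rfl
          _ ≤ strongSeries A (n + 1) := starSet_le_strongSeries ⟨n, by omega⟩ (by simp)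

lemma strongSeries_antitone : Antitone (strongSeries A) :=
  antitone_nat_of_succ_le strongSeries_succ_le

lemma leftSeries_succ_le (n : ℕ) : leftSeries A (n + 1) ≤ leftSeries A n := by
  induction n with
  | zero => exact le_top
  | succ n ih =>
    show starSet Set.univ (leftSeries A (n+1) : Set A) ≤ starSet Set.univ (leftSeries A n : Set A)
    exact starSet_mono subset_rfl ih

lemma leftSeries_antitone : Antitone (leftSeries A) :=
  antitone_nat_of_succ_le leftSeries_succ_le

lemma rightSeries_succ_le (n : ℕ) : rightSeries A (n + 1) ≤ rightSeries A n := by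
  induction n with
  | zero => exact le_top
  | succ n ih => exact starSet_mono ih subset_rfl

lemma rightSeries_antitone : Antitone (rightSeries A) :=
  antitone_nat_of_succ_le rightSeries_succ_le

lemma leftSeries_le_strongSeries (n : ℕ) : leftSeries A n ≤ strongSeries A n := by
  induction n with
  | zero => rw [strongSeries_zero]; exact le_top
  | succ n ih =>
    calc leftSeries A (n+1) = starSet Set.univ (leftSeries A n : Set A) := rfl
      _ ≤ starSet (strongSeries A 0 : Set A) (strongSeries A n : Set A) := by
          rw [strongSeries_zero]
          exact starSet_mono (by simp) ih
      _ ≤ strongSeries A (n + 1) := starSet_le_strongSeries ⟨0, by omega⟩ (by simp)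

lemma rightSeries_le_strongSeries (n : ℕ) : rightSeries A n ≤ strongSeries A n := by
  induction n with
  | zero => rw [strongSeries_zero]; exact le_top
  | succ n ih =>
    calc rightSeries A (n+1) = starSet (rightSeries A n : Set A) Set.univ := rfl
      _ ≤ starSet (strongSeries A n : Set A) (strongSeries A 0 : Set A) := by
          rw [strongSeries_zero]
          exact starSet_mono ih (by simp)
      _ ≤ strongSeries A (n + 1) := starSet_le_strongSeries ⟨n, by omega⟩ (Nat.sub_self n).symm

-- words
def rnw : A → List A → A
  | a, [] => a
  | a, b :: bs => bstar a (rnw b bs)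

def lnw : A → List A → A
  | a, [] => a
  | a, b :: bs => lnw (bstar a b) bs

def sigmaChain : List A → A → A
  | [], r => r
  | a :: as, r => bstar a (sigmaChain as r)

def piChain : A → List A → A
  | v, [] => v
  | v, b :: bs => piChain (bstar v b) bs

lemma rnw_mem_leftSeries (a : A) (l : List A) : rnw a l ∈ leftSeries A l.length := by
  induction l generalizing a with
  | nil => exact AddSubgroup.mem_top _
  | cons b bs ih =>
    show bstar a (rnw b bs) ∈ starSet Set.univ (leftSeries A bs.length : Set A)
    exact bstar_mem_starSet (Set.mem_univ a) (ih b)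

lemma lnw_mem_rightSeries_aux (l : List A) : ∀ (a : A) (k : ℕ), a ∈ rightSeries A k →
    lnw a l ∈ rightSeries A (k + l.length) := by
  induction l with
  | nil => intro a k hk; simpa [lnw] using hk
  | cons b bs ih =>
    intro a k hk
    have h1 : bstar a b ∈ rightSeries A (k + 1) :=
      bstar_mem_starSet hk (Set.mem_univ b)
    have := ih (bstar a b) (k+1) h1
    show lnw (bstar a b) bs ∈ rightSeries A (k + (bs.length + 1))
    have harr : k + 1 + bs.length = k + (bs.length + 1) := by omega
    rwa [harr] at this

lemma lnw_mem_rightSeries (a : A) (l : List A) : lnw a l ∈ rightSeries A l.length := by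
  have := lnw_mem_rightSeries_aux l a 0 (AddSubgroup.mem_top _)
  simpa using this

lemma piChain_snoc (v : A) (bs : List A) (b : A) :
    piChain v (bs ++ [b]) = bstar (piChain v bs) b := by
  induction bs generalizing v with
  | nil => rfl
  | cons c cs ih => exact ih (bstar v c)



-- primed aliases used by the engine
lemma bstar_zero_left' (b : A) : bstar 0 b = 0 := bstar_zero_left b
lemma bstar_zero_right' (a : A) : bstar a 0 = 0 := bstar_zero_right a
lemma bstar_add_right' (x y z : A) : bstar x (y + z) = bstar x y + y + bstar x z - y :=
  bstar_add_right x y z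
lemma bstar_add_left' (h2s : IsTwoSided A) (x z y : A) :
    bstar (x + z) y = -z + bstar x y + z + bstar z y := bstar_add_left h2s x z y
lemma bstar_neg_right' (x y : A) : bstar x (-y) = -y + -(bstar x y) + y := bstar_neg_right x y
lemma bstar_neg_left' (h2s : IsTwoSided A) (x y : A) :
    bstar (-x) y = x + -(bstar x y) + -x := bstar_neg_left h2s x y
lemma bstar_bstar' (h2s : IsTwoSided A) (x y z : A) :
    bstar (bstar x y) z =
      -(bstar x y) + (-(bstar x z) + (bstar x y + (y + (bstar x (bstar y z) +
        (bstar y z + (bstar x z + (-(bstar y z) + -y))))))) := bstar_bstar h2s x y z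
lemma strongSeries_zero' : strongSeries A 0 = ⊤ := strongSeries_zero
lemma strongSeries_succ' (n : ℕ) : strongSeries A (n + 1) = ⨆ i : Fin (n + 1),
    starSet (strongSeries A i.val : Set A) (strongSeries A (n - i.val) : Set A) :=
  strongSeries_succ n
lemma strongSeries_antitone' : Antitone (strongSeries A) := strongSeries_antitone
lemma leftSeries_antitone' : Antitone (leftSeries A) := leftSeries_antitone
lemma rightSeries_antitone' : Antitone (rightSeries A) := rightSeries_antitone
lemma starSet_le' {X Y : Set A} {K : AddSubgroup A}
    (h : ∀ x ∈ X, ∀ y ∈ Y, bstar x y ∈ K) : starSet X Y ≤ K := starSet_le h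
lemma rnw_mem_leftSeries' (a : A) (l : List A) : rnw a l ∈ leftSeries A l.length :=
  rnw_mem_leftSeries a l
lemma lnw_mem_rightSeries' (a : A) (l : List A) : lnw a l ∈ rightSeries A l.length :=
  lnw_mem_rightSeries a l
lemma piChain_snoc' (v : A) (bs : List A) (b : A) :
    piChain v (bs ++ [b]) = bstar (piChain v bs) b := piChain_snoc v bs b

structure ModCtx (A : Type*) [SkewBrace A] (V Γ : AddSubgroup A) : Prop where
  h2s : IsTwoSided A
  hGV : Γ ≤ V
  hcomm : ∀ u ∈ V, ∀ a : A, u + a - u - a ∈ Γ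
  hlV : ∀ (a : A), ∀ u ∈ V, bstar a u ∈ V
  hrV : ∀ (a : A), ∀ u ∈ V, bstar u a ∈ V
  hlG : ∀ (a : A), ∀ u ∈ Γ, bstar a u ∈ Γ
  hrG : ∀ (a : A), ∀ u ∈ Γ, bstar u a ∈ Γ

def Cong (Γ : AddSubgroup A) (x y : A) : Prop := x - y ∈ Γ

section CongBasic
variable {Γ : AddSubgroup A}

lemma cong_refl (x : A) : Cong Γ x x := by
  show x - x ∈ Γ; simpa using Γ.zero_mem

lemma cong_of_eq {x y : A} (h : x = y) : Cong Γ x y := h ▸ cong_refl x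

lemma cong_symm {x y : A} (h : Cong Γ x y) : Cong Γ y x := by
  have e : y - x = -(x - y) := by simp
  show y - x ∈ Γ; rw [e]; exact Γ.neg_mem h

lemma cong_trans {x y z : A} (h1 : Cong Γ x y) (h2 : Cong Γ y z) : Cong Γ x z := by
  have e : x - z = (x - y) + (y - z) := by
    simp [sub_eq_add_neg, add_assoc]
  show x - z ∈ Γ; rw [e]; exact Γ.add_mem h1 h2

lemma cong_zero_of_mem {g : A} (hg : g ∈ Γ) : Cong Γ g 0 := by
  show g - 0 ∈ Γ; simpa using hg

lemma mem_of_cong_zero {g : A} (h : Cong Γ g 0) : g ∈ Γ := by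
  have : g - 0 ∈ Γ := h
  simpa using this

lemma mem_of_cong {x y : A} {K : AddSubgroup A} (hGK : Γ ≤ K) (h : Cong Γ x y) (hy : y ∈ K) :
    x ∈ K := by
  have e : x = (x - y) + y := by simp
  rw [e]; exact K.add_mem (hGK h) hy

end CongBasic

namespace ModCtx

variable {V Γ : AddSubgroup A} (hc : ModCtx A V Γ)
include hc

lemma comm_mem_right {u : A} (hu : u ∈ V) (a : A) : a + u - a - u ∈ Γ := by
  have h := hc.hcomm u hu a
  have e : a + u - a - u = -(u + a - u - a) := by
    simp [sub_eq_add_neg, neg_add_rev, add_assoc]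
  rw [e]; exact Γ.neg_mem h

lemma gnormal' {g : A} (hg : g ∈ Γ) (a : A) : a + g - a ∈ Γ := by
  have h := hc.comm_mem_right (hc.hGV hg) a
  have e : a + g - a = (a + g - a - g) + g := by
    simp [sub_eq_add_neg, add_assoc]
  rw [e]; exact Γ.add_mem h hg

lemma cong_add' {a b c d : A} (h1 : Cong Γ a b) (h2 : Cong Γ c d) : Cong Γ (a + c) (b + d) := by
  have e : (a + c) - (b + d) = (a + (c - d) - a) + (a - b) := by
    simp [sub_eq_add_neg, neg_add_rev, add_assoc]
  show _ ∈ Γ; rw [e]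
  exact Γ.add_mem (hc.gnormal' h2 a) h1

lemma mem_V_of_cong' {x y : A} (h : Cong Γ x y) (hy : y ∈ V) : x ∈ V :=
  mem_of_cong hc.hGV h hy

/-- conjugate of an element of V -/
lemma cong_conj_v {s : A} (hs : s ∈ V) (a : A) : Cong Γ (a + (s + -a)) s := by
  have h := hc.comm_mem_right hs a
  have e : (a + (s + -a)) - s = a + s - a - s := by
    simp [sub_eq_add_neg, add_assoc]
  show _ ∈ Γ; rw [e]; exact h

/-- conjugation by an element of V -/
lemma cong_conj_by_v {v : A} (hv : v ∈ V) (w : A) : Cong Γ (v + (w + -v)) w := by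
  have h := hc.hcomm v hv w
  have e : (v + (w + -v)) - w = v + w - v - w := by
    simp [sub_eq_add_neg, add_assoc]
  show _ ∈ Γ; rw [e]; exact h

lemma cong_comm_v {s : A} (hs : s ∈ V) (a : A) : Cong Γ (s + a) (a + s) := by
  have h := hc.hcomm s hs a
  have e : (s + a) - (a + s) = s + a - s - a := by
    simp [sub_eq_add_neg, neg_add_rev, add_assoc]
  show _ ∈ Γ; rw [e]; exact h

/-- M3R: right congruence -/
lemma cong_bstar_right' {u u' : A} (x : A) (h : Cong Γ u u') :
    Cong Γ (bstar x u) (bstar x u') := by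
  have hg : u - u' ∈ Γ := h
  have e0 : u = (u - u') + u' := by simp
  have e1 : bstar x u = bstar x (u - u') + (u - u') + bstar x u' - (u - u') := by
    conv_lhs => rw [e0]
    exact bstar_add_right' x (u - u') u'
  have e2 : bstar x (u - u') + (u - u') + bstar x u' - (u - u')
      = bstar x (u - u') + ((u - u') + (bstar x u' + -(u - u'))) := by
    simp [sub_eq_add_neg, add_assoc]
  have c1 : Cong Γ (bstar x (u - u')) 0 := cong_zero_of_mem (hc.hlG x _ hg)
  have c2 : Cong Γ ((u - u') + (bstar x u' + -(u - u'))) (bstar x u') :=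
    hc.cong_conj_by_v (hc.hGV hg) _
  have := hc.cong_add' c1 c2
  rw [e1, e2]
  exact cong_trans this (cong_of_eq (zero_add _))

/-- M3L: left congruence -/
lemma cong_bstar_left' {u u' : A} (y : A) (h : Cong Γ u u') :
    Cong Γ (bstar u y) (bstar u' y) := by
  have hg : u - u' ∈ Γ := h
  have e0 : u = (u - u') + u' := by simp
  have e1 : bstar u y = -u' + bstar (u - u') y + u' + bstar u' y := by
    conv_lhs => rw [e0]
    exact bstar_add_left' hc.h2s (u - u') u' y
  have e2 : -u' + bstar (u - u') y + u' + bstar u' y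
      = (-u' + bstar (u - u') y + u') + bstar u' y := rfl
  have c1 : Cong Γ (-u' + bstar (u - u') y + u') 0 := by
    apply cong_zero_of_mem
    have := hc.gnormal' (hc.hrG y _ hg) (-u')
    simpa [sub_eq_add_neg] using this
  have := hc.cong_add' c1 (cong_refl (bstar u' y))
  rw [e1, e2]
  exact cong_trans this (cong_of_eq (zero_add _))

/-- M4: associativity modulo Γ -/
lemma cong_assoc' {x y z : A} (hcase : x ∈ V ∨ y ∈ V ∨ z ∈ V) :
    Cong Γ (bstar (bstar x y) z) (bstar x (bstar y z)) := by
  set p := bstar x y with hp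
  set q := bstar x z with hq
  set r := bstar y z with hr
  set s := bstar x (bstar y z) with hs
  have hdec : bstar (bstar x y) z =
      (-p + (-q + (p + q))) + ((-q + (y + (s + -y))) + (y + ((r + (q + -r)) + -y))) := by
    rw [bstar_bstar' hc.h2s]
    simp [add_assoc, hp, hq, hr, hs]
  -- c1 ∈ Γ in all cases
  have hc1 : Cong Γ (-p + (-q + (p + q))) 0 := by
    apply cong_zero_of_mem
    rcases hcase with hx | hy | hz
    · have : p ∈ V := hc.hrV y x hx
      have h := hc.hcomm (-p) (V.neg_mem this) (-q)
      have e : -p + -q - -p - -q = -p + (-q + (p + q)) := by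
        simp [sub_eq_add_neg, add_assoc]
      rwa [e] at h
    · have : p ∈ V := hc.hlV x y hy
      have h := hc.hcomm (-p) (V.neg_mem this) (-q)
      have e : -p + -q - -p - -q = -p + (-q + (p + q)) := by
        simp [sub_eq_add_neg, add_assoc]
      rwa [e] at h
    · have : q ∈ V := hc.hlV x z hz
      have h := hc.comm_mem_right (V.neg_mem this) (-p)
      have e : -p + -q - -p - -q = -p + (-q + (p + q)) := by
        simp [sub_eq_add_neg, add_assoc]
      rwa [e] at h
  -- s ∈ V in all cases
  have hsV : s ∈ V := by
    rcases hcase with hx | hy | hz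
    · exact hc.hrV _ x hx
    · exact hc.hlV x _ (hc.hrV z y hy)
    · exact hc.hlV x _ (hc.hlV y z hz)
  have hc2 : Cong Γ (-q + (y + (s + -y))) (s + -q) := by
    have h1 : Cong Γ (y + (s + -y)) s := hc.cong_conj_v hsV y
    have h2 := hc.cong_add' (cong_refl (-q)) h1
    exact cong_trans h2 (cong_symm (hc.cong_comm_v hsV (-q)))
  have hc3 : Cong Γ (y + ((r + (q + -r)) + -y)) q := by
    rcases hcase with hx | hy | hz
    · -- x ∈ V : q ∈ V
      have hqV : q ∈ V := hc.hrV z x hx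
      have h1 : Cong Γ (r + (q + -r)) q := hc.cong_conj_v hqV r
      have hXV : (r + (q + -r)) ∈ V := hc.mem_V_of_cong' h1 hqV
      exact cong_trans (hc.cong_conj_v hXV y) h1
    · -- y ∈ V : r ∈ V
      have hrV' : r ∈ V := hc.hrV z y hy
      have h1 : Cong Γ (r + (q + -r)) q := hc.cong_conj_by_v hrV' q
      exact cong_trans (hc.cong_conj_by_v hy _) h1
    · -- z ∈ V : q, r ∈ V
      have hqV : q ∈ V := hc.hlV x z hz
      have hrV' : r ∈ V := hc.hlV y z hz
      have h1 : Cong Γ (r + (q + -r)) q := hc.cong_conj_by_v hrV' q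
      have hXV : (r + (q + -r)) ∈ V := hc.mem_V_of_cong' h1 hqV
      exact cong_trans (hc.cong_conj_v hXV y) h1
  have hfin := hc.cong_add' hc1 (hc.cong_add' hc2 hc3)
  rw [← hdec] at hfin
  have e : 0 + ((s + -q) + q) = s := by simp [add_assoc]
  exact cong_trans hfin (cong_of_eq e)


lemma sigmaChain_mem_V {r : A} (hr : r ∈ V) (as : List A) : sigmaChain as r ∈ V := by
  induction as with
  | nil => exact hr
  | cons a as ih => exact hc.hlV a _ ih

lemma sigmaChain_mem_G {r : A} (hr : r ∈ Γ) (as : List A) : sigmaChain as r ∈ Γ := by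
  induction as with
  | nil => exact hr
  | cons a as ih => exact hc.hlG a _ ih

lemma piChain_mem_V {v : A} (hv : v ∈ V) (bs : List A) : piChain v bs ∈ V := by
  induction bs generalizing v with
  | nil => exact hv
  | cons b bs ih => exact ih (hc.hrV b v hv)

lemma piChain_congr {u u' : A} (h : Cong Γ u u') (bs : List A) :
    Cong Γ (piChain u bs) (piChain u' bs) := by
  induction bs generalizing u u' with
  | nil => exact h
  | cons b bs ih => exact ih (cong_bstar_left' hc b h)

/-- σ-collapse, right-normed version -/
lemma sigma_collapse_r (as : List A) (a : A) {r : A} (hr : r ∈ V) :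
    Cong Γ (sigmaChain (a :: as) r) (bstar (rnw a as) r) := by
  induction as generalizing a with
  | nil => exact cong_refl _
  | cons a' as ih =>
    show Cong Γ (bstar a (sigmaChain (a' :: as) r)) _
    have h1 := cong_bstar_right' hc a (ih a')
    have h2 := cong_assoc' hc (x := a) (y := rnw a' as) (z := r) (Or.inr (Or.inr hr))
    exact cong_trans h1 (cong_symm h2)

/-- σ-collapse, left-normed version -/
lemma sigma_collapse_l (as : List A) (a : A) {r : A} (hr : r ∈ V) :
    Cong Γ (sigmaChain (a :: as) r) (bstar (lnw a as) r) := by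
  induction as generalizing a with
  | nil => exact cong_refl _
  | cons b bs ih =>
    show Cong Γ (bstar a (bstar b (sigmaChain bs r))) _
    have hX : sigmaChain bs r ∈ V := hc.sigmaChain_mem_V hr bs
    have h2 := cong_assoc' hc (x := a) (y := b) (z := sigmaChain bs r)
      (Or.inr (Or.inr hX))
    have h3 : Cong Γ (sigmaChain (bstar a b :: bs) r) (bstar (lnw (bstar a b) bs) r) :=
      ih (bstar a b)
    exact cong_trans (cong_symm h2) h3

/-- π-collapse, right-normed version -/
lemma pi_collapse_r (bs : List A) {v : A} (b : A) (hv : v ∈ V) :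
    Cong Γ (piChain v (b :: bs)) (bstar v (rnw b bs)) := by
  induction bs generalizing v b with
  | nil => exact cong_refl _
  | cons b' bs ih =>
    show Cong Γ (piChain (bstar v b) (b' :: bs)) _
    have h1 := ih (b := b') (hc.hrV b v hv)
    have h2 := cong_assoc' hc (x := v) (y := b) (z := rnw b' bs) (Or.inl hv)
    exact cong_trans h1 h2

/-- π-collapse, left-normed version -/
lemma pi_collapse_l (bs : List A) {v : A} (b : A) (hv : v ∈ V) :
    Cong Γ (piChain v (b :: bs)) (bstar v (lnw b bs)) := by
  induction bs generalizing v b with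
  | nil => exact cong_refl _
  | cons b' bs ih =>
    show Cong Γ (piChain (bstar v b) (b' :: bs)) _
    have h2 := cong_assoc' hc (x := v) (y := b) (z := b') (Or.inl hv)
    have h3 : piChain (bstar v b) (b' :: bs) = piChain (bstar (bstar v b) b') bs := rfl
    have h4 : Cong Γ (piChain (bstar (bstar v b) b') bs) (piChain (bstar v (bstar b b')) bs) :=
      hc.piChain_congr h2 bs
    have h5 : Cong Γ (piChain v (bstar b b' :: bs)) (bstar v (lnw (bstar b b') bs)) :=
      ih (b := bstar b b') hv
    rw [h3]
    exact cong_trans h4 h5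

/-- swap: push a right-star through a σ-chain -/
lemma swap_chain (as : List A) {r : A} (b : A) (hr : r ∈ V) :
    Cong Γ (bstar (sigmaChain as r) b) (sigmaChain as (bstar r b)) := by
  induction as with
  | nil => exact cong_refl _
  | cons a as ih =>
    show Cong Γ (bstar (bstar a (sigmaChain as r)) b) _
    have hX : sigmaChain as r ∈ V := hc.sigmaChain_mem_V hr as
    have h1 := cong_assoc' hc (x := a) (y := sigmaChain as r) (z := b)
      (Or.inr (Or.inl hX))
    have h2 := cong_bstar_right' hc a ih
    exact cong_trans h1 h2

/-- the subgroup generated by Γ and all mixed words of length ≥ j with core in V -/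
def Cset (V Γ : AddSubgroup A) (j : ℕ) : AddSubgroup A :=
  AddSubgroup.closure ((Γ : Set A) ∪
    {w | ∃ (as bs : List A) (v : A), v ∈ V ∧ j ≤ as.length + bs.length ∧
      w = sigmaChain as (piChain v bs)})

lemma G_le_Cset (j : ℕ) : Γ ≤ Cset V Γ j := by
  intro g hg
  exact AddSubgroup.subset_closure (Or.inl hg)

omit hc in
lemma word_mem_Cset {j : ℕ} {as bs : List A} {v : A} (hv : v ∈ V)
    (hlen : j ≤ as.length + bs.length) :
    sigmaChain as (piChain v bs) ∈ Cset V Γ j :=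
  AddSubgroup.subset_closure (Or.inr ⟨as, bs, v, hv, hlen, rfl⟩)

lemma V_le_Cset_zero : V ≤ Cset V Γ 0 := by
  intro v hv
  have : sigmaChain [] (piChain v []) ∈ Cset V Γ 0 :=
    word_mem_Cset (V := V) (Γ := Γ) (bs := []) hv (by simp)
  simpa [sigmaChain, piChain] using this

lemma stepR (j : ℕ) (x : A) : ∀ {y : A}, y ∈ Cset V Γ j →
    y ∈ V ∧ bstar x y ∈ Cset V Γ (j + 1) := by
  intro y hy
  induction hy using AddSubgroup.closure_induction with
  | mem w hw =>
    rcases hw with hw | ⟨as, bs, v, hv, hlen, rfl⟩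
    · refine ⟨hc.hGV hw, hc.G_le_Cset (j+1) (hc.hlG x w hw)⟩
    · refine ⟨hc.sigmaChain_mem_V (hc.piChain_mem_V hv bs) as, ?_⟩
      have : bstar x (sigmaChain as (piChain v bs))
          = sigmaChain (x :: as) (piChain v bs) := rfl
      rw [this]
      exact word_mem_Cset (V := V) (Γ := Γ) hv (by simp; omega)
  | zero =>
    refine ⟨V.zero_mem, ?_⟩
    rw [bstar_zero_right']
    exact (Cset V Γ (j+1)).zero_mem
  | add y₁ y₂ _ _ h1 h2 =>
    refine ⟨V.add_mem h1.1 h2.1, ?_⟩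
    rw [bstar_add_right']
    have hcm : y₁ + bstar x y₂ - y₁ - bstar x y₂ ∈ Γ :=
      hc.hcomm y₁ h1.1 (bstar x y₂)
    have e : bstar x y₁ + y₁ + bstar x y₂ - y₁
        = bstar x y₁ + ((y₁ + bstar x y₂ - y₁ - bstar x y₂) + bstar x y₂) := by
      simp [sub_eq_add_neg, add_assoc]
    rw [e]
    exact (Cset V Γ (j+1)).add_mem h1.2
      ((Cset V Γ (j+1)).add_mem (hc.G_le_Cset (j+1) hcm) h2.2)
  | neg y _ h1 =>
    refine ⟨V.neg_mem h1.1, ?_⟩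
    rw [bstar_neg_right']
    have hcm : -y + -(bstar x y) - -y - -(bstar x y) ∈ Γ :=
      hc.hcomm (-y) (V.neg_mem h1.1) (-(bstar x y))
    have e : -y + -(bstar x y) + y
        = (-y + -(bstar x y) - -y - -(bstar x y)) + -(bstar x y) := by
      simp [sub_eq_add_neg, add_assoc]
    rw [e]
    exact (Cset V Γ (j+1)).add_mem (hc.G_le_Cset (j+1) hcm)
      ((Cset V Γ (j+1)).neg_mem h1.2)

lemma stepL (j : ℕ) (y : A) : ∀ {x : A}, x ∈ Cset V Γ j →
    x ∈ V ∧ bstar x y ∈ Cset V Γ (j + 1) := by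
  intro x hx
  induction hx using AddSubgroup.closure_induction with
  | mem w hw =>
    rcases hw with hw | ⟨as, bs, v, hv, hlen, rfl⟩
    · refine ⟨hc.hGV hw, hc.G_le_Cset (j+1) (hc.hrG y w hw)⟩
    · refine ⟨hc.sigmaChain_mem_V (hc.piChain_mem_V hv bs) as, ?_⟩
      have hr : piChain v bs ∈ V := hc.piChain_mem_V hv bs
      have h1 := hc.swap_chain as y hr
      have h2 : bstar (piChain v bs) y = piChain v (bs ++ [y]) :=
        (piChain_snoc' v bs y).symm
      rw [h2] at h1
      have h3 : sigmaChain as (piChain v (bs ++ [y])) ∈ Cset V Γ (j+1) :=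
        word_mem_Cset (V := V) (Γ := Γ) hv (by simp; omega)
      exact mem_of_cong (hc.G_le_Cset (j+1)) h1 h3
  | zero =>
    refine ⟨V.zero_mem, ?_⟩
    rw [bstar_zero_left']
    exact (Cset V Γ (j+1)).zero_mem
  | add x₁ x₂ _ _ h1 h2 =>
    refine ⟨V.add_mem h1.1 h2.1, ?_⟩
    rw [bstar_add_left' hc.h2s]
    have hcm : -x₂ + bstar x₁ y - -x₂ - bstar x₁ y ∈ Γ :=
      hc.hcomm (-x₂) (V.neg_mem h2.1) (bstar x₁ y)
    have e : -x₂ + bstar x₁ y + x₂ + bstar x₂ y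
        = ((-x₂ + bstar x₁ y - -x₂ - bstar x₁ y) + bstar x₁ y) + bstar x₂ y := by
      simp [sub_eq_add_neg, add_assoc]
    rw [e]
    exact (Cset V Γ (j+1)).add_mem
      ((Cset V Γ (j+1)).add_mem (hc.G_le_Cset (j+1) hcm) h1.2) h2.2
  | neg x _ h1 =>
    refine ⟨V.neg_mem h1.1, ?_⟩
    rw [bstar_neg_left' hc.h2s]
    have hcm : x + -(bstar x y) - x - -(bstar x y) ∈ Γ :=
      hc.hcomm x h1.1 (-(bstar x y))
    have e : x + -(bstar x y) + -x
        = (x + -(bstar x y) - x - -(bstar x y)) + -(bstar x y) := by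
      simp [sub_eq_add_neg, add_assoc]
    rw [e]
    exact (Cset V Γ (j+1)).add_mem (hc.G_le_Cset (j+1) hcm)
      ((Cset V Γ (j+1)).neg_mem h1.2)

lemma bridge {n : ℕ} (hSV : strongSeries A n ≤ V) :
    ∀ (j i : ℕ), (n + 2) * 2 ^ j ≤ i → strongSeries A i ≤ Cset V Γ j := by
  intro j
  induction j with
  | zero =>
    intro i hi
    have hi' : n + 2 ≤ i := by simpa using hi
    have h1 : strongSeries A i ≤ strongSeries A n :=
      strongSeries_antitone' (by omega)
    exact h1.trans (hSV.trans hc.V_le_Cset_zero)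
  | succ j ih =>
    intro i hi
    have hN : 0 < (n + 2) * 2 ^ j := Nat.mul_pos (by omega) (Nat.two_pow_pos j)
    have hpow : (n + 2) * 2 ^ (j + 1) = 2 * ((n + 2) * 2 ^ j) := by ring
    obtain ⟨i', rfl⟩ : ∃ i', i = i' + 1 := ⟨i - 1, by omega⟩
    rw [strongSeries_succ']
    apply iSup_le
    intro t
    set p := t.val with hpt
    have hpq : p + (i' - p) = i' := by
      have := t.isLt; omega
    rcases le_or_gt ((n+2) * 2^j) (i' - p) with hble | hblt
    · -- right factor deep
      apply starSet_le'
      intro x hx yy hyy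
      have hy' : yy ∈ Cset V Γ j := ih (i' - p) hble hyy
      exact (hc.stepR j x hy').2
    · -- left factor deep
      have hp : (n+2) * 2^j ≤ p := by omega
      apply starSet_le'
      intro x hx yy hyy
      have hx' : x ∈ Cset V Γ j := ih p hp hx
      exact (hc.stepL j yy hx').2

lemma kill {m : ℕ} (hword : leftSeries A m = ⊥ ∨ rightSeries A m = ⊥) :
    Cset V Γ (2 * m + 2) ≤ Γ := by
  rw [Cset, AddSubgroup.closure_le]
  rintro w (hw | ⟨as, bs, v, hv, hlen, rfl⟩)
  · exact hw
  · rcases le_or_gt (m + 1) as.length with has | has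
    · --长 σ-block
      obtain ⟨a, as', rfl⟩ : ∃ a as', as = a :: as' := by
        cases as with
        | nil => simp at has
        | cons a as' => exact ⟨a, as', rfl⟩
      have hr : piChain v bs ∈ V := hc.piChain_mem_V hv bs
      have hzero : ∀ (u : A), u = 0 → bstar u (piChain v bs) = 0 := by
        rintro u rfl; exact bstar_zero_left' _
      rcases hword with hL | hR
      · have h1 := hc.sigma_collapse_r as' a hr
        have h2 : rnw a as' = 0 := by
          have := rnw_mem_leftSeries' a as'
          have hle : leftSeries A as'.length ≤ leftSeries A m :=
            leftSeries_antitone' (by simp at has ⊢; omega)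
          rw [hL] at hle
          simpa using hle this
        rw [h2, bstar_zero_left'] at h1
        exact mem_of_cong_zero h1
      · have h1 := hc.sigma_collapse_l as' a hr
        have h2 : lnw a as' = 0 := by
          have := lnw_mem_rightSeries' a as'
          have hle : rightSeries A as'.length ≤ rightSeries A m :=
            rightSeries_antitone' (by simp at has ⊢; omega)
          rw [hR] at hle
          simpa using hle this
        rw [h2, bstar_zero_left'] at h1
        exact mem_of_cong_zero h1
    · -- 长 π-block
      have hbs : m + 1 ≤ bs.length := by omega
      obtain ⟨b, bs', rfl⟩ : ∃ b bs', bs = b :: bs' := by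
        cases bs with
        | nil => simp at hbs
        | cons b bs' => exact ⟨b, bs', rfl⟩
      have hpi : piChain v (b :: bs') ∈ Γ := by
        rcases hword with hL | hR
        · have h1 := hc.pi_collapse_r bs' b hv
          have h2 : rnw b bs' = 0 := by
            have := rnw_mem_leftSeries' b bs'
            have hle : leftSeries A bs'.length ≤ leftSeries A m :=
              leftSeries_antitone' (by simp at hbs ⊢; omega)
            rw [hL] at hle
            simpa using hle this
          rw [h2, bstar_zero_right'] at h1
          exact mem_of_cong_zero h1
        · have h1 := hc.pi_collapse_l bs' b hv
          have h2 : lnw b bs' = 0 := by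
            have := lnw_mem_rightSeries' b bs'
            have hle : rightSeries A bs'.length ≤ rightSeries A m :=
              rightSeries_antitone' (by simp at hbs ⊢; omega)
            rw [hR] at hle
            simpa using hle this
          rw [h2, bstar_zero_right'] at h1
          exact mem_of_cong_zero h1
      exact hc.sigmaChain_mem_G hpi as

lemma engine {n m : ℕ} (hSV : strongSeries A n ≤ V)
    (hword : leftSeries A m = ⊥ ∨ rightSeries A m = ⊥) :
    strongSeries A ((n + 2) * 2 ^ (2 * m + 2)) ≤ Γ :=
  (hc.bridge hSV (2*m+2) _ le_rfl).trans (hc.kill hword)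


end ModCtx

lemma strong_of_word (h2s : IsTwoSided A) (hnil : Group.IsNilpotent (Multiplicative A))
    {m : ℕ} (hword : leftSeries A m = ⊥ ∨ rightSeries A m = ⊥) : IsStronglyNilpotent A := by
  have key : ∀ s, ∃ n, strongSeries A n ≤ gammaA A s := by
    intro s
    induction s with
    | zero => exact ⟨0, by rw [strongSeries_zero']; exact le_rfl⟩
    | succ s ih =>
      obtain ⟨n, hn⟩ := ih
      have hctx : ModCtx A (gammaA A s) (gammaA A (s+1)) :=
        { h2s := h2s
          hGV := gammaA_succ_le s
          hcomm := fun u hu a => comm_mem_gammaA hu a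
          hlV := fun a u hu => bstar_mem_gammaA_right a hu
          hrV := fun a u hu => bstar_mem_gammaA_left h2s hu a
          hlG := fun a u hu => bstar_mem_gammaA_right a hu
          hrG := fun a u hu => bstar_mem_gammaA_left h2s hu a }
      exact ⟨(n+2) * 2^(2*m+2), hctx.engine hn hword⟩
  obtain ⟨c, hgc⟩ := gammaA_eq_bot_of_nilpotent hnil
  obtain ⟨n, hn⟩ := key c
  exact ⟨n, le_bot_iff.mp (hgc ▸ hn)⟩

lemma left_of_strong (hS : IsStronglyNilpotent A) : IsLeftNilpotent A := by
  obtain ⟨n, hn⟩ := hS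
  exact ⟨n, le_bot_iff.mp (hn ▸ leftSeries_le_strongSeries n)⟩

lemma right_of_strong (hS : IsStronglyNilpotent A) : IsRightNilpotent A := by
  obtain ⟨n, hn⟩ := hS
  exact ⟨n, le_bot_iff.mp (hn ▸ rightSeries_le_strongSeries n)⟩

end SkewBrace

open SkewBrace in
/-- For a two-sided skew brace of nilpotent type (i.e. `(A,+)` is nilpotent), left
nilpotency, right nilpotency and strong nilpotency are equivalent. -/
theorem two_sided_nilpotent_type_nilpotency_tfae (A : Type*) [SkewBrace A]
    (h : IsTwoSided A) (hnil : Group.IsNilpotent (Multiplicative A)) :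
    (IsLeftNilpotent A ↔ IsRightNilpotent A) ∧
    (IsLeftNilpotent A ↔ IsStronglyNilpotent A) := by
  have hLS : IsLeftNilpotent A → IsStronglyNilpotent A := by
    rintro ⟨m, hm⟩
    exact strong_of_word h hnil (Or.inl hm)
  have hRS : IsRightNilpotent A → IsStronglyNilpotent A := by
    rintro ⟨m, hm⟩
    exact strong_of_word h hnil (Or.inr hm)
  exact ⟨⟨fun hL => right_of_strong (hLS hL), fun hR => left_of_strong (hRS hR)⟩,
    ⟨hLS, left_of_strong⟩⟩
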